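/- Let ν, μ, λ ∈ ℝ and k ∈ ℤ∖{0} with δ := (k+λ)² + μ² − ν² < 0, set γ := √(−δ) and E := (1/(2iγ(λ+k−iγ))) [[λ+k−iγ, ν−μ], [−(ν+μ), −(λ+k−iγ)]]. Let A = (A⁺, A⁻), Ã = (Ã⁺, Ã⁻) ∈ ℂ² and let f = (f⁺,f⁻), g = (g⁺,g⁻) : (0,∞) → ℂ² satisfy lim_{r→0⁺} r^{−1/2} | f(r) − E·(A⁺ r^{iγ}, A⁻ r^{−iγ}) | = 0 and lim_{r→0⁺} r^{−1/2} | g(r) − E·(Ã⁺ r^{iγ}, Ã⁻ r^{−iγ}) | = 0. Then lim_{r→0⁺} [ f⁺(r) conj(g⁻(r)) − f⁻(r) conj(g⁺(r)) ] = (EA)₁ conj((EÃ)₂) − (EA)₂ conj((EÃ)₁), where EA and EÃ denote the matrix-vector products E·(A⁺,A⁻) and E·(Ã⁺,Ã⁻). -/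

import Mathlib

/-!
Write `W(x, y) = x₁ conj y₂ - x₂ conj y₁`. The error terms are `o(√r)`, hence `o(1)`, and the model
solutions `E (A⁺ r^{iγ}, A⁻ r^{-iγ})` stay bounded because `|r^{±iγ}| = 1`; since `W` is
sesquilinear, `W(f, g)` differs from the Wronskian of the model solutions by `o(1)`. That Wronskian
does not depend on `r`: its diagonal terms carry the factors `|r^{±iγ}|² = 1`, and its cross terms
carry `W(E e₁, E e₂) = |c|² ((ν² - μ²) - |λ + k - iγ|²)`, where `c` is the scalar prefactor of `E`;
this vanishes because `γ² = ν² - μ² - (λ + k)²`.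
-/

open MeasureTheory Real Filter

noncomputable section

/-- The matrix E from the supercritical case δ < 0. -/
def matE (ν μ lam γ : ℝ) (k : ℤ) : Matrix (Fin 2) (Fin 2) ℂ :=
  (1 / (2 * Complex.I * (γ : ℂ) * (((lam + (k : ℝ) : ℝ) : ℂ) - Complex.I * (γ : ℂ)))) •
    !![((lam + (k : ℝ) : ℝ) : ℂ) - Complex.I * (γ : ℂ), ((ν - μ : ℝ) : ℂ);
       -((ν + μ : ℝ) : ℂ), -(((lam + (k : ℝ) : ℝ) : ℂ) - Complex.I * (γ : ℂ))]

open Complex ComplexConjugate Topology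
open scoped Matrix

def wronskian (x y : Fin 2 → ℂ) : ℂ := x 0 * conj (y 1) - x 1 * conj (y 0)

lemma norm_wronskian_le (x y : Fin 2 → ℂ) : ‖wronskian x y‖ ≤ 2 * ‖x‖ * ‖y‖ := by
  calc ‖wronskian x y‖ ≤ ‖x 0‖ * ‖y 1‖ + ‖x 1‖ * ‖y 0‖ := by
        simpa [wronskian] using norm_sub_le (x 0 * conj (y 1)) (x 1 * conj (y 0))
    _ ≤ ‖x‖ * ‖y‖ + ‖x‖ * ‖y‖ := by gcongr <;> apply norm_le_pi_norm
    _ = 2 * ‖x‖ * ‖y‖ := by ring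

lemma wronskian_sub_wronskian (x y X Y : Fin 2 → ℂ) :
    wronskian x y - wronskian X Y =
      wronskian (x - X) (y - Y) + wronskian (x - X) Y + wronskian X (y - Y) := by
  simp only [wronskian, Pi.sub_apply, map_sub]
  ring

lemma tendsto_wronskian_of_tendsto_sub {α : Type*} {l : Filter α} {f g F G : α → Fin 2 → ℂ}
    {L : ℂ} (hf : Tendsto (f - F) l (𝓝 0)) (hg : Tendsto (g - G) l (𝓝 0))
    (hF : IsBoundedUnder (· ≤ ·) l (norm ∘ F)) (hG : IsBoundedUnder (· ≤ ·) l (norm ∘ G))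
    (hW : ∀ x, wronskian (F x) (G x) = L) :
    Tendsto (fun x => wronskian (f x) (g x)) l (𝓝 L) := by
  rw [← tendsto_sub_nhds_zero_iff]
  have hbound : ∀ x, ‖wronskian (f x) (g x) - L‖ ≤
      2 * (‖f x - F x‖ * ‖g x - G x‖ + ‖f x - F x‖ * ‖G x‖ + ‖F x‖ * ‖g x - G x‖) := by
    intro x
    rw [← hW x, wronskian_sub_wronskian]
    refine (norm_add₃_le ..).trans ?_
    linarith [norm_wronskian_le (f x - F x) (g x - G x), norm_wronskian_le (f x - F x) (G x),
      norm_wronskian_le (F x) (g x - G x)]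
  refine squeeze_zero_norm hbound ?_
  have hf' : Tendsto (fun x => ‖f x - F x‖) l (𝓝 0) := by simpa using hf.norm
  have hg' : Tendsto (fun x => ‖g x - G x‖) l (𝓝 0) := by simpa using hg.norm
  have hF' : IsBoundedUnder (· ≤ ·) l (norm ∘ fun x => ‖F x‖) := by
    simpa [Function.comp_def] using hF
  have hG' : IsBoundedUnder (· ≤ ·) l (norm ∘ fun x => ‖G x‖) := by
    simpa [Function.comp_def] using hG
  simpa using (((hf'.mul hg').add (hf'.zero_mul_isBoundedUnder_le hG')).add
    (isBoundedUnder_le_mul_tendsto_zero hF' hg')).const_mul 2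

lemma isBoundedUnder_norm_mulVec_phase {α : Type*} {l : Filter α}
    (M : Matrix (Fin 2) (Fin 2) ℂ) (a b : ℂ) {u v : α → ℂ} (hu : ∀ x, ‖u x‖ = 1)
    (hv : ∀ x, ‖v x‖ = 1) :
    IsBoundedUnder (· ≤ ·) l (fun x => ‖M *ᵥ ![a * u x, b * v x]‖) := by
  have hcont : Continuous fun z : ℂ × ℂ => M *ᵥ ![a * z.1, b * z.2] :=
    continuous_const.matrix_mulVec
      (continuous_pi (Fin.forall_fin_two.2 ⟨by fun_prop, by fun_prop⟩))
  obtain ⟨C, hC⟩ := (((isCompact_sphere (0 : ℂ) 1).prod (isCompact_sphere 0 1)).image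
    hcont).isBounded.exists_norm_le
  exact isBoundedUnder_of ⟨C, fun x =>
    hC _ ⟨(u x, v x), ⟨by simpa using hu x, by simpa using hv x⟩, rfl⟩⟩

lemma wronskian_mulVec_phase (M : Matrix (Fin 2) (Fin 2) ℂ) (hM : wronskian (Mᵀ 0) (Mᵀ 1) = 0)
    {u v : ℂ} (hu : ‖u‖ = 1) (hv : ‖v‖ = 1) (a b c d : ℂ) :
    wronskian (M *ᵥ ![a * u, b * v]) (M *ᵥ ![c * u, d * v]) =
      wronskian (M *ᵥ ![a, b]) (M *ᵥ ![c, d]) := by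
  have hu' : u * conj u = 1 := by simp [mul_conj', hu]
  have hv' : v * conj v = 1 := by simp [mul_conj', hv]
  simp only [wronskian, Matrix.transpose_apply] at hM
  have hM' := congrArg conj hM
  simp only [map_sub, map_mul, conj_conj, map_zero] at hM'
  simp only [wronskian, Matrix.mulVec, dotProduct, Fin.sum_univ_two, Matrix.cons_val_zero,
    Matrix.cons_val_one, map_add, map_mul]
  linear_combination
    (a * conj c * (M 0 0 * conj (M 1 0) - M 1 0 * conj (M 0 0))) * hu' +
    (b * conj d * (M 0 1 * conj (M 1 1) - M 1 1 * conj (M 0 1))) * hv' +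
    (a * conj d * (u * conj v - 1)) * hM - (b * conj c * (v * conj u - 1)) * hM'

lemma wronskian_transpose_matE {ν μ lam γ : ℝ} (k : ℤ)
    (hγ : γ ^ 2 = ν ^ 2 - μ ^ 2 - (lam + k) ^ 2) :
    wronskian ((matE ν μ lam γ k)ᵀ 0) ((matE ν μ lam γ k)ᵀ 1) = 0 := by
  have hγ' : (γ : ℂ) ^ 2 = ν ^ 2 - μ ^ 2 - (lam + k) ^ 2 := by exact_mod_cast hγ
  simp only [wronskian, matE, ofReal_add, ofReal_intCast, one_div, mul_inv_rev, inv_I, neg_mul,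
    mul_neg, ofReal_sub, neg_add_rev, neg_sub, neg_smul, Matrix.smul_of, Matrix.smul_cons,
    smul_eq_mul, Matrix.smul_empty, Matrix.neg_of, Matrix.neg_cons, Matrix.neg_empty,
    Matrix.transpose_apply, Matrix.of_apply, Matrix.cons_val', Matrix.cons_val_zero,
    Matrix.cons_val_fin_one, Matrix.cons_val_one, map_neg, map_mul, map_inv₀, map_sub, map_add,
    conj_ofReal, map_intCast, conj_I, sub_neg_eq_add, map_ofNat, neg_neg]
  -- the coefficient is `c * conj c`, `c` the scalar prefactor of `matE`, in its post-`simp` form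
  linear_combination
    ((lam + k - I * γ : ℂ)⁻¹ * ((γ : ℂ)⁻¹ * (I * 2⁻¹)) *
      ((lam + k + I * γ : ℂ)⁻¹ * ((γ : ℂ)⁻¹ * (I * 2⁻¹)))) * (hγ' - (γ : ℂ) ^ 2 * I_sq)

lemma tendsto_nhdsGT_zero_of_mul_rpow_neg {a : ℝ → ℝ} {s : ℝ} (hs : 0 ≤ s)
    (h : Tendsto (fun r => a r * r ^ (-s)) (𝓝[>] 0) (𝓝 0)) : Tendsto a (𝓝[>] 0) (𝓝 0) := by
  have hrpow : Tendsto (fun r : ℝ => r ^ s) (𝓝[>] 0) (𝓝 (0 ^ s)) :=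
    ((continuousAt_rpow_const 0 s (Or.inr hs)).tendsto).mono_left nhdsWithin_le_nhds
  refine (zero_mul ((0 : ℝ) ^ s) ▸ h.mul hrpow).congr' ?_
  filter_upwards [self_mem_nhdsWithin] with r (hr : 0 < r)
  rw [mul_assoc, ← rpow_add hr, neg_add_cancel, rpow_zero, mul_one]

lemma tendsto_vecCons_zero_of_sqrt {α E : Type*} [SeminormedAddCommGroup E] {l : Filter α}
    {p q : α → E} (h : Tendsto (fun x => √(‖p x‖ ^ 2 + ‖q x‖ ^ 2)) l (𝓝 0)) :
    Tendsto (fun x => ![p x, q x]) l (𝓝 0) := by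
  refine tendsto_pi_nhds.2 (Fin.forall_fin_two.2 ⟨?_, ?_⟩) <;>
    refine squeeze_zero_norm (fun x => le_sqrt_of_sq_le ?_) h <;>
    simp

lemma tendsto_sub_of_sqrt_mul_rpow {p q : ℝ → ℂ} {X : ℝ → Fin 2 → ℂ} {s : ℝ} (hs : 0 ≤ s)
    (h : Tendsto (fun r => √(‖p r - X r 0‖ ^ 2 + ‖q r - X r 1‖ ^ 2) * r ^ (-s)) (𝓝[>] 0) (𝓝 0)) :
    Tendsto (fun r => ![p r, q r] - X r) (𝓝[>] 0) (𝓝 0) := by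
  convert tendsto_vecCons_zero_of_sqrt (tendsto_nhdsGT_zero_of_mul_rpow_neg hs h) using 2 with r
  ext i
  fin_cases i <;> rfl

theorem wronskian_limit_supercritical_general (ν μ lam : ℝ) (k : ℤ)
    (hδ : (((k : ℝ) + lam) ^ 2 + μ ^ 2 - ν ^ 2) < 0) (γ : ℝ)
    (hγ : γ = Real.sqrt (-(((k : ℝ) + lam) ^ 2 + μ ^ 2 - ν ^ 2)))
    (Ap Am Bp Bm : ℂ) (fp fm gp gm : ℝ → ℂ)
    (hf : Tendsto (fun r : ℝ =>
        Real.sqrt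
          (norm (fp r -
              (matE ν μ lam γ k).mulVec
                ![Ap * Complex.exp (Complex.I * γ * Real.log r),
                  Am * Complex.exp (-(Complex.I * γ * Real.log r))] 0) ^ 2 +
            norm (fm r -
              (matE ν μ lam γ k).mulVec
                ![Ap * Complex.exp (Complex.I * γ * Real.log r),
                  Am * Complex.exp (-(Complex.I * γ * Real.log r))] 1) ^ 2) *
          r ^ (-(1 / 2 : ℝ))) (nhdsWithin 0 (Set.Ioi 0)) (nhds 0))
    (hg : Tendsto (fun r : ℝ =>
        Real.sqrt
          (norm (gp r -
              (matE ν μ lam γ k).mulVec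
                ![Bp * Complex.exp (Complex.I * γ * Real.log r),
                  Bm * Complex.exp (-(Complex.I * γ * Real.log r))] 0) ^ 2 +
            norm (gm r -
              (matE ν μ lam γ k).mulVec
                ![Bp * Complex.exp (Complex.I * γ * Real.log r),
                  Bm * Complex.exp (-(Complex.I * γ * Real.log r))] 1) ^ 2) *
          r ^ (-(1 / 2 : ℝ))) (nhdsWithin 0 (Set.Ioi 0)) (nhds 0)) :
    Tendsto (fun r : ℝ => fp r * (starRingEnd ℂ) (gm r) - fm r * (starRingEnd ℂ) (gp r))
      (nhdsWithin 0 (Set.Ioi 0))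
      (nhds ((matE ν μ lam γ k).mulVec ![Ap, Am] 0 *
          (starRingEnd ℂ) ((matE ν μ lam γ k).mulVec ![Bp, Bm] 1) -
        (matE ν μ lam γ k).mulVec ![Ap, Am] 1 *
          (starRingEnd ℂ) ((matE ν μ lam γ k).mulVec ![Bp, Bm] 0))) := by
  have hγsq : γ ^ 2 = ν ^ 2 - μ ^ 2 - (lam + k) ^ 2 := by
    rw [hγ, sq_sqrt (by linarith)]
    ring
  have hu : ∀ r : ℝ, ‖exp (I * γ * Real.log r)‖ = 1 := fun r => by simp [norm_exp]
  have hv : ∀ r : ℝ, ‖exp (-(I * γ * Real.log r))‖ = 1 := fun r => by simp [norm_exp]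
  have hlim := tendsto_wronskian_of_tendsto_sub (tendsto_sub_of_sqrt_mul_rpow one_half_pos.le hf)
    (tendsto_sub_of_sqrt_mul_rpow one_half_pos.le hg)
    (isBoundedUnder_norm_mulVec_phase _ Ap Am hu hv)
    (isBoundedUnder_norm_mulVec_phase _ Bp Bm hu hv)
    fun r => wronskian_mulVec_phase _ (wronskian_transpose_matE k hγsq) (hu r) (hv r) ..
  exact hlim

/-- boundary limit of the Wronskian-type expression in the supercritical
case δ < 0, where r^{±iγ} := exp(±iγ log r). -/
theorem wronskian_limit_supercritical (ν μ lam : ℝ) (k : ℤ) (hk : k ≠ 0)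
    (hδ : (((k : ℝ) + lam) ^ 2 + μ ^ 2 - ν ^ 2) < 0) (γ : ℝ)
    (hγ : γ = Real.sqrt (-(((k : ℝ) + lam) ^ 2 + μ ^ 2 - ν ^ 2)))
    (Ap Am Bp Bm : ℂ) (fp fm gp gm : ℝ → ℂ)
    (hf : Tendsto (fun r : ℝ =>
        Real.sqrt
          (norm (fp r -
              (matE ν μ lam γ k).mulVec
                ![Ap * Complex.exp (Complex.I * γ * Real.log r),
                  Am * Complex.exp (-(Complex.I * γ * Real.log r))] 0) ^ 2 +
            norm (fm r -
              (matE ν μ lam γ k).mulVec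
                ![Ap * Complex.exp (Complex.I * γ * Real.log r),
                  Am * Complex.exp (-(Complex.I * γ * Real.log r))] 1) ^ 2) *
          r ^ (-(1 / 2 : ℝ))) (nhdsWithin 0 (Set.Ioi 0)) (nhds 0))
    (hg : Tendsto (fun r : ℝ =>
        Real.sqrt
          (norm (gp r -
              (matE ν μ lam γ k).mulVec
                ![Bp * Complex.exp (Complex.I * γ * Real.log r),
                  Bm * Complex.exp (-(Complex.I * γ * Real.log r))] 0) ^ 2 +
            norm (gm r -
              (matE ν μ lam γ k).mulVec
                ![Bp * Complex.exp (Complex.I * γ * Real.log r),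
                  Bm * Complex.exp (-(Complex.I * γ * Real.log r))] 1) ^ 2) *
          r ^ (-(1 / 2 : ℝ))) (nhdsWithin 0 (Set.Ioi 0)) (nhds 0)) :
    Tendsto (fun r : ℝ => fp r * (starRingEnd ℂ) (gm r) - fm r * (starRingEnd ℂ) (gp r))
      (nhdsWithin 0 (Set.Ioi 0))
      (nhds ((matE ν μ lam γ k).mulVec ![Ap, Am] 0 *
          (starRingEnd ℂ) ((matE ν μ lam γ k).mulVec ![Bp, Bm] 1) -
        (matE ν μ lam γ k).mulVec ![Ap, Am] 1 *
          (starRingEnd ℂ) ((matE ν μ lam γ k).mulVec ![Bp, Bm] 0))) :=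
  wronskian_limit_supercritical_general ν μ lam k hδ γ hγ Ap Am Bp Bm fp fm gp gm hf hg
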